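/- Upper bound on leader payoff in the Tantrum game: in the n-fold Tantrum game with stage payoffs accede = (q₁, -q₂) with q₁ > 0, q₂ > 1, and leader choice (0,0) or (-1,-1) after refuse, any incentive-compatible joint strategy (SEFCE) gives the leader expected payoff at most q₁ · n/q₂. -/
import Mathlib


/-- A finite two-player perfect-information game tree: leaves carry payoffs
`(r₁, r₂)`; internal nodes belong to the leader (`isLeader = true`) or the
follower, and have a nonempty (finite) family of children. -/
inductive GTree : Type
  | leaf (r₁ r₂ : ℝ) : GTree
  | node (isLeader : Bool) (n : ℕ) (children : Fin (n + 1) → GTree) : GTree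

/-- Follower's backward-induction value against the grim (follower-payoff-minimizing)
leader strategy. -/
noncomputable def GTree.grim : GTree → ℝ
  | .leaf _ r₂ => r₂
  | .node isLeader _ c =>
      if isLeader then
        Finset.univ.inf' Finset.univ_nonempty (fun i => (c i).grim)
      else
        Finset.univ.sup' Finset.univ_nonempty (fun i => (c i).grim)

/-- Follower's backward-induction value under the joint altruistic
(follower-payoff-maximizing) strategy profile. -/
noncomputable def GTree.alt : GTree → ℝ
  | .leaf _ r₂ => r₂
  | .node _ _ c => Finset.univ.sup' Finset.univ_nonempty (fun i => (c i).alt)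

def ConcaveE (g : ℝ → EReal) : Prop :=
  ∀ x y t : ℝ, 0 ≤ t → t ≤ 1 →
    (t : EReal) * g x + ((1 - t : ℝ) : EReal) * g y ≤ g (t * x + (1 - t) * y)

/-- Upper concave envelope of an extended-real-valued function. -/
noncomputable def concE (f : ℝ → EReal) : ℝ → EReal :=
  fun μ => ⨅ h : {h : ℝ → EReal // ConcaveE h ∧ ∀ x, f x ≤ h x}, (h : ℝ → EReal) μ

/-- Left truncation at an extended-real threshold. -/
noncomputable def truncE' (g : ℝ → EReal) (t : EReal) : ℝ → EReal :=
  fun μ => if t ≤ (μ : EReal) then g μ else ⊥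

/-- Minimum required incentive of the child `i` among the family `c`:
the maximum grim value over the *other* children (`⊥` if there are none). -/
noncomputable def tauOf {n : ℕ} (c : Fin (n + 1) → GTree) (i : Fin (n + 1)) : EReal :=
  ⨆ (j : Fin (n + 1)) (_ : j ≠ i), ((c j).grim : EReal)

/-- The Enforceable Payoff Frontier (EPF), defined by backward induction:
degenerate at leaves; upper concave envelope of the children's EPFs at leader
nodes; upper concave envelope of the left-truncated children's EPFs at follower
nodes. -/
noncomputable def GTree.epf : GTree → ℝ → EReal
  | .leaf r₁ r₂ => fun μ => if μ = r₂ then (r₁ : EReal) else ⊥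
  | .node isLeader _ c =>
      if isLeader then
        concE (fun μ => ⨆ i, (c i).epf μ)
      else
        concE (fun μ => ⨆ i, truncE' ((c i).epf) (tauOf c i) μ)

/-- Number of leaves of the subtree. -/
def GTree.numLeaves : GTree → ℕ
  | .leaf _ _ => 1
  | .node _ _ c => ∑ i, (c i).numLeaves

/-- The `n`-fold Tantrum game, with accumulated payoffs `(a, b)` so far. -/
noncomputable def tantrum (q₁ q₂ : ℝ) : ℕ → ℝ → ℝ → GTree
  | 0, a, b => .leaf a b
  | n + 1, a, b => .node false 1 (fun i =>
      if i = 0 then tantrum q₁ q₂ n (a + q₁) (b - q₂)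
      else .node true 1 (fun j =>
        if j = 0 then tantrum q₁ q₂ n a b
        else tantrum q₁ q₂ n (a - 1) (b - 1)))

noncomputable def Hfun (q₁ q₂ a b : ℝ) (n : ℕ) : ℝ → EReal :=
  fun μ => if b - n ≤ μ then ((a + q₁/q₂*(b-μ) : ℝ) : EReal) else ⊥

lemma concaveE_trunc (L : ℝ → ℝ) (c : ℝ)
    (hL : ∀ t x y : ℝ, t * L x + (1-t) * L y = L (t*x + (1-t)*y)) :
    ConcaveE (fun μ => if c ≤ μ then ((L μ : ℝ) : EReal) else ⊥) := by
  intro x y t ht ht1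
  by_cases hx : c ≤ x <;> by_cases hy : c ≤ y
  · have hc : c ≤ t*x + (1-t)*y := by nlinarith
    simp only [if_pos hx, if_pos hy, if_pos hc]
    rw [← EReal.coe_mul, ← EReal.coe_mul, ← EReal.coe_add]
    exact EReal.coe_le_coe_iff.mpr (le_of_eq (hL t x y))
  · rcases eq_or_lt_of_le ht1 with h1 | h1
    · subst h1
      simp only [if_pos hx, sub_self, EReal.coe_zero, EReal.zero_mul, add_zero,
        one_mul, EReal.coe_one]
      have harg : x + 0*y = x := by ring
      rw [harg, if_pos hx]
    · have hb : ((1-t:ℝ) : EReal) * (if c ≤ y then ((L y : ℝ):EReal) else ⊥) = ⊥ := by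
        rw [if_neg hy]; exact EReal.coe_mul_bot_of_pos (by linarith)
      rw [hb, EReal.add_bot]; exact bot_le
  · rcases eq_or_lt_of_le ht with h1 | h1
    · subst h1
      simp only [if_pos hy, EReal.coe_zero, EReal.zero_mul, zero_add, sub_zero,
        EReal.coe_one, one_mul]
      have harg : 0*x + y = y := by ring
      rw [harg, if_pos hy]
    · have hb : (t : EReal) * (if c ≤ x then ((L x : ℝ):EReal) else ⊥) = ⊥ := by
        rw [if_neg hx]; exact EReal.coe_mul_bot_of_pos h1
      rw [hb, EReal.bot_add]; exact bot_le
  · rcases eq_or_lt_of_le ht with h1 | h1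
    · subst h1
      have hb : ((1-0:ℝ) : EReal) * (if c ≤ y then ((L y : ℝ):EReal) else ⊥) = ⊥ := by
        rw [if_neg hy]; exact EReal.coe_mul_bot_of_pos (by norm_num)
      rw [hb, EReal.add_bot]; exact bot_le
    · have hb : (t : EReal) * (if c ≤ x then ((L x : ℝ):EReal) else ⊥) = ⊥ := by
        rw [if_neg hx]; exact EReal.coe_mul_bot_of_pos h1
      rw [hb, EReal.bot_add]; exact bot_le

lemma concaveE_H (q₁ q₂ a b : ℝ) (n : ℕ) : ConcaveE (Hfun q₁ q₂ a b n) :=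
  concaveE_trunc (fun μ => a + q₁/q₂*(b-μ)) (b-n) (by intro t x y; ring)

lemma concE_le {f h : ℝ → EReal} (hh : ConcaveE h) (hfh : ∀ x, f x ≤ h x) (μ : ℝ) :
    concE f μ ≤ h μ :=
  iInf_le (fun g : {g : ℝ → EReal // ConcaveE g ∧ ∀ x, f x ≤ g x} => (g : ℝ → EReal) μ)
    ⟨h, hh, hfh⟩

lemma sup'_fin_two (f : Fin (1+1) → ℝ) :
    Finset.univ.sup' Finset.univ_nonempty f = max (f 0) (f 1) := by
  apply le_antisymm
  · apply Finset.sup'_le; intro i _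
    fin_cases i
    · exact le_max_left _ _
    · exact le_max_right _ _
  · apply max_le <;> apply Finset.le_sup' <;> simp

lemma inf'_fin_two (f : Fin (1+1) → ℝ) :
    Finset.univ.inf' Finset.univ_nonempty f = min (f 0) (f 1) := by
  apply le_antisymm
  · apply le_min <;> apply Finset.inf'_le <;> simp
  · apply Finset.le_inf'; intro i _
    fin_cases i
    · exact min_le_left _ _
    · exact min_le_right _ _

lemma grim_node_true (c : Fin (1+1) → GTree) :
    (GTree.node true 1 c).grim = min (c 0).grim (c 1).grim := by
  simp only [GTree.grim, if_pos]
  rw [inf'_fin_two]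

lemma grim_node_false (c : Fin (1+1) → GTree) :
    (GTree.node false 1 c).grim = max (c 0).grim (c 1).grim := by
  simp only [GTree.grim, Bool.false_eq_true, if_false]
  rw [sup'_fin_two]

lemma grim_inner (q₁ q₂ : ℝ) (n : ℕ) (a b : ℝ)
    (ih : ∀ a b : ℝ, (tantrum q₁ q₂ n a b).grim = b - n) :
    (GTree.node true 1 (fun j : Fin (1+1) =>
        if j = 0 then tantrum q₁ q₂ n a b
        else tantrum q₁ q₂ n (a - 1) (b - 1))).grim = b - 1 - n := by
  rw [grim_node_true, if_pos rfl, if_neg (by decide : ¬((1 : Fin (1+1)) = 0)),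
    ih, ih, min_eq_right (by linarith)]

lemma grim_tantrum (q₁ q₂ : ℝ) (hq₂ : 1 < q₂) :
    ∀ n (a b : ℝ), (tantrum q₁ q₂ n a b).grim = b - n := by
  intro n
  induction n with
  | zero => intro a b; simp [tantrum, GTree.grim]
  | succ n ih =>
    intro a b
    set c : Fin (1+1) → GTree := fun i =>
      if i = 0 then tantrum q₁ q₂ n (a + q₁) (b - q₂)
      else .node true 1 (fun j =>
        if j = 0 then tantrum q₁ q₂ n a b
        else tantrum q₁ q₂ n (a - 1) (b - 1)) with hcdef
    have e0 : c 0 = tantrum q₁ q₂ n (a + q₁) (b - q₂) := by rw [hcdef]; exact if_pos rfl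
    have e1 : c 1 = .node true 1 (fun j =>
        if j = 0 then tantrum q₁ q₂ n a b
        else tantrum q₁ q₂ n (a - 1) (b - 1)) := by rw [hcdef]; exact if_neg (by decide)
    rw [show tantrum q₁ q₂ (n+1) a b = .node false 1 c from rfl,
      grim_node_false, e0, e1, grim_inner q₁ q₂ n a b ih, ih,
      max_eq_right (by linarith)]
    push_cast; ring

lemma H_mono {q₁ q₂ a a' b b' : ℝ} {n m : ℕ}
    (hdom : ∀ μ:ℝ, b' - n ≤ μ → b - m ≤ μ)
    (hval : ∀ μ:ℝ, b' - n ≤ μ → a' + q₁/q₂*(b'-μ) ≤ a + q₁/q₂*(b-μ)) :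
    ∀ μ, Hfun q₁ q₂ a' b' n μ ≤ Hfun q₁ q₂ a b m μ := by
  intro μ
  unfold Hfun
  split_ifs with h1 h2
  · exact EReal.coe_le_coe_iff.mpr (hval μ h1)
  · exact absurd (hdom μ h1) h2
  · exact bot_le
  · exact bot_le

lemma truncE'_le (g : ℝ → EReal) (t : EReal) (x : ℝ) : truncE' g t x ≤ g x := by
  unfold truncE'; split
  · exact le_rfl
  · exact bot_le

lemma epf_le (q₁ q₂ : ℝ) (hq₁ : 0 < q₁) (hq₂ : 1 < q₂) :
    ∀ n (a b μ : ℝ), (tantrum q₁ q₂ n a b).epf μ ≤ Hfun q₁ q₂ a b n μ := by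
  have hq₂0 : (0:ℝ) < q₂ := by linarith
  have hq : (0:ℝ) ≤ q₁/q₂ := div_nonneg hq₁.le hq₂0.le
  intro n
  induction n with
  | zero =>
    intro a b μ
    show (GTree.leaf a b).epf μ ≤ _
    simp only [GTree.epf, Hfun, Nat.cast_zero]
    by_cases h : μ = b
    · subst h
      rw [if_pos rfl, if_pos (by linarith)]
      exact EReal.coe_le_coe_iff.mpr (by nlinarith)
    · rw [if_neg h]; exact bot_le
  | succ n ih =>
    intro a b μ
    set c : Fin (1+1) → GTree := fun i =>
      if i = 0 then tantrum q₁ q₂ n (a + q₁) (b - q₂)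
      else .node true 1 (fun j =>
        if j = 0 then tantrum q₁ q₂ n a b
        else tantrum q₁ q₂ n (a - 1) (b - 1)) with hcdef
    have e0 : c 0 = tantrum q₁ q₂ n (a + q₁) (b - q₂) := by rw [hcdef]; exact if_pos rfl
    have e1 : c 1 = .node true 1 (fun j =>
        if j = 0 then tantrum q₁ q₂ n a b
        else tantrum q₁ q₂ n (a - 1) (b - 1)) := by rw [hcdef]; exact if_neg (by decide)
    rw [show tantrum q₁ q₂ (n+1) a b = .node false 1 c from rfl]
    have hnode : (GTree.node false 1 c).epf =
        concE (fun μ => ⨆ i, truncE' ((c i).epf) (tauOf c i) μ) := by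
      simp [GTree.epf]
    rw [hnode]
    apply concE_le (concaveE_H q₁ q₂ a b (n+1))
    intro x
    apply iSup_le
    intro i
    by_cases hi : i = 0
    · -- accede child
      rw [hi]
      by_cases hx : b - ((n:ℝ)+1) ≤ x
      · have step1 : (c 0).epf x ≤ Hfun q₁ q₂ (a+q₁) (b-q₂) n x := by
          rw [e0]; exact ih (a+q₁) (b-q₂) x
        refine le_trans (truncE'_le _ _ _) (le_trans step1 ?_)
        unfold Hfun
        rw [if_pos (show b - ((n+1:ℕ):ℝ) ≤ x by push_cast; linarith)]
        split_ifs with h2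
        · apply EReal.coe_le_coe_iff.mpr
          have hcan : q₁/q₂*q₂ = q₁ := div_mul_cancel₀ q₁ (ne_of_gt hq₂0)
          nlinarith [hcan]
        · exact bot_le
      · have hg : ((c 1).grim : EReal) ≤ tauOf c 0 :=
          le_iSup₂ (f := fun j (_ : j ≠ (0 : Fin (1+1))) => ((c j).grim : EReal)) 1 (by decide)
        have hg1 : (c 1).grim = b - 1 - n := by
          rw [e1]; exact grim_inner q₁ q₂ n a b (grim_tantrum q₁ q₂ hq₂ n)
        have hnle : ¬ (tauOf c 0 ≤ (x : EReal)) := by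
          intro h
          have h2 := le_trans hg h
          rw [hg1] at h2
          have h3 := EReal.coe_le_coe_iff.mp h2
          linarith
        show truncE' ((c 0).epf) (tauOf c 0) x ≤ _
        unfold truncE'
        rw [if_neg hnle]
        exact bot_le
    · -- refuse child (leader node)
      have hi1 : i = 1 := by revert hi; revert i; decide
      rw [hi1]
      refine le_trans (truncE'_le _ _ _) ?_
      rw [e1]
      have hnode' : (GTree.node true 1 (fun j : Fin (1+1) =>
          if j = 0 then tantrum q₁ q₂ n a b
          else tantrum q₁ q₂ n (a - 1) (b - 1))).epf =
          concE (fun μ => ⨆ j : Fin (1+1), ((fun j : Fin (1+1) =>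
            if j = 0 then tantrum q₁ q₂ n a b
            else tantrum q₁ q₂ n (a - 1) (b - 1)) j).epf μ) := by
        simp [GTree.epf]
      rw [hnode']
      apply concE_le (concaveE_H q₁ q₂ a b (n+1))
      intro y
      apply iSup_le
      intro j
      by_cases hj : j = 0
      · rw [hj]
        simp only [if_pos rfl]
        refine le_trans (ih a b y) (H_mono ?_ ?_ y)
        · intro μ h; push_cast; push_cast at h; linarith
        · intro μ _; exact le_rfl
      · have hj1 : j = 1 := by revert hj; revert j; decide
        rw [hj1]
        norm_num
        refine le_trans (ih (a-1) (b-1) y) (H_mono ?_ ?_ y)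
        · intro μ h; push_cast; push_cast at h; linarith
        · intro μ _
          have hr : q₁/q₂*(b-μ) = q₁/q₂*(b-1-μ) + q₁/q₂ := by ring
          linarith

/-- Upper bound on the leader payoff in the Tantrum game: every incentive-compatible
joint strategy (i.e. every point of the EPF at the root) gives the leader expected
payoff at most `q₁ · n / q₂`. -/
theorem tantrum_upper_bound (q₁ q₂ : ℝ) (hq₁ : 0 < q₁) (hq₂ : 1 < q₂) (n : ℕ) :
    (⨆ μ : ℝ, (tantrum q₁ q₂ n 0 0).epf μ) ≤ ((q₁ * n / q₂ : ℝ) : EReal) := by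
  apply iSup_le
  intro μ
  refine le_trans (epf_le q₁ q₂ hq₁ hq₂ n 0 0 μ) ?_
  have hq₂0 : (0:ℝ) < q₂ := by linarith
  have hq : (0:ℝ) ≤ q₁/q₂ := div_nonneg hq₁.le hq₂0.le
  unfold Hfun
  split_ifs with h
  · apply EReal.coe_le_coe_iff.mpr
    have h1 : -μ ≤ (n:ℝ) := by linarith
    have h2 : q₁/q₂*(0-μ) ≤ q₁/q₂*n := by
      apply mul_le_mul_of_nonneg_left _ hq
      linarith
    have h3 : q₁/q₂*(n:ℝ) = q₁*n/q₂ := by ring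
    linarith
  · exact bot_le
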